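/- Let p and q be coprime integers with p > q > 1 and p > 2q−1. Then the topological closure in ℝ of the span-set Span = {span(n) : n ∈ ℕ} has no isolated points: every point x of the closure of Span is an accumulation point of the closure of Span. -/

import Mathlib

/-- `w` labels a branch of the base-p/q automaton with digit set `E` from state `n`:
there are states `s 0 = n, s 1, s 2, …` with `q·s(k+1) = p·s k + w k` and `w k ∈ E`. -/
def IsBranch (p q : ℕ) (E : Set ℤ) (n : ℕ) (w : ℕ → ℤ) : Prop :=
  ∃ s : ℕ → ℕ, s 0 = n ∧ ∀ k : ℕ, (q : ℤ) * s (k + 1) = p * s k + w k ∧ w k ∈ E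

/-- `u` (a word of length `ℓ`) labels a path from `n` to `m` in the base-p/q automaton
with digit set `E`. -/
def IsPath (p q : ℕ) (E : Set ℤ) (n m ℓ : ℕ) (u : ℕ → ℤ) : Prop :=
  ∃ s : ℕ → ℕ, s 0 = n ∧ s ℓ = m ∧
    ∀ k < ℓ, (q : ℤ) * s (k + 1) = p * s k + u k ∧ u k ∈ E

/-- The canonical digit alphabet `A_p = {0, 1, …, p−1}`. -/
def Ap (p : ℕ) : Set ℤ := Set.Icc 0 ((p : ℤ) - 1)

/-- The lower alphabet `{0, 1, …, q−1}`. -/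
def LowAlph (q : ℕ) : Set ℤ := Set.Icc 0 ((q : ℤ) - 1)

/-- The upper alphabet `{p−q, …, p−1}`. -/
def UpAlph (p q : ℕ) : Set ℤ := Set.Icc ((p : ℤ) - q) ((p : ℤ) - 1)

/-- The alphabet `D = {p−2q+1, …, p−1}` of the automaton `S_{p/q}`. -/
def Dalph (p q : ℕ) : Set ℤ := Set.Icc ((p : ℤ) - 2 * q + 1) ((p : ℤ) - 1)

/-- Evaluation after the radix point: `ρ(w) = Σ_{i≥1} (w_i/q)·(q/p)^i`
(here `w k` is the `(k+1)`-st digit). -/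
noncomputable def rho (p q : ℕ) (w : ℕ → ℤ) : ℝ :=
  ∑' i : ℕ, ((w i : ℝ) / q) * ((q : ℝ) / p) ^ (i + 1)

/-!
The span of `n` is `ρ` of the digit sequence `d = maxword(n) - minword(n)`, and the first `M`
digits of `d` depend only on `n mod q ^ M`. Replacing `n` by `n + q ^ M * u` therefore moves the
span by `O((q / p) ^ M)`, while, `p` being a unit mod `q`, the choice of `u` steers the residues
that fix the digit at level `M`. At a level where the gap between the max- and min-states is not
`≡ -1 mod q` (such levels occur beyond every `M`, otherwise that gap would be divisible by all
powers of `q`), two choices of `u` give digits differing by exactly `q`; steering the next `K`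
digits to be `≥ p - q` on one side and `≤ p - q` on the other keeps the tails from cancelling this
difference, so the two spans differ. Hence every span is a limit of other spans, and the closure
of a set without isolated points is perfect.
-/

theorem IsBranch.eq {p q : ℕ} {E : Set ℤ} {n : ℕ} {w₁ w₂ : ℕ → ℤ} (h₁ : IsBranch p q E n w₁)
    (h₂ : IsBranch p q E n w₂) (hE : ∀ x ∈ E, ∀ y ∈ E, |x - y| < q) : w₁ = w₂ := by
  obtain ⟨s₁, hs₁, hstep₁⟩ := h₁
  obtain ⟨s₂, hs₂, hstep₂⟩ := h₂
  have hq : (q : ℤ) ≠ 0 := by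
    have := hE _ (hstep₁ 0).2 _ (hstep₁ 0).2
    rw [sub_self, abs_zero] at this
    exact this.ne'
  have hdigit : ∀ k, s₁ k = s₂ k → w₁ k = w₂ k := by
    intro k hk
    have hdvd : (q : ℤ) ∣ w₁ k - w₂ k :=
      ⟨s₁ (k + 1) - s₂ (k + 1), by rw [mul_sub, (hstep₁ k).1, (hstep₂ k).1, hk]; ring⟩
    exact sub_eq_zero.1 (Int.eq_zero_of_abs_lt_dvd hdvd (hE _ (hstep₁ k).2 _ (hstep₂ k).2))
  have hstate : ∀ k, s₁ k = s₂ k := by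
    intro k
    induction k with
    | zero => rw [hs₁, hs₂]
    | succ k ih =>
      have : (q : ℤ) * s₁ (k + 1) = q * s₂ (k + 1) := by
        rw [(hstep₁ k).1, (hstep₂ k).1, ih, hdigit k ih]
      exact_mod_cast mul_left_cancel₀ hq this
  exact funext fun k => hdigit k (hstate k)

namespace RationalBase

variable {p q : ℕ}

/-- With `c = q - 1` (ceiling division) and `c = p - 1` this is the state sequence of
`minword n` and of `maxword n` respectively. -/
def orbit (p q c n : ℕ) : ℕ → ℕ
  | 0 => n
  | k + 1 => (p * orbit p q c n k + c) / q

def orbitDigit (p q c n k : ℕ) : ℤ := q * orbit p q c n (k + 1) - p * orbit p q c n k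

theorem orbitDigit_eq (c n k : ℕ) :
    orbitDigit p q c n k = c - (p * orbit p q c n k + c : ℤ) % q := by
  rw [orbitDigit, orbit, Int.emod_def]
  push_cast
  ring

theorem orbitDigit_mem_Icc (hq : 0 < q) (c n k : ℕ) :
    orbitDigit p q c n k ∈ Set.Icc ((c : ℤ) - q + 1) c := by
  have h₀ := Int.emod_nonneg (p * orbit p q c n k + c : ℤ) (by omega : (q : ℤ) ≠ 0)
  have h₁ := Int.emod_lt_of_pos (p * orbit p q c n k + c : ℤ) (by omega : (0 : ℤ) < q)
  rw [orbitDigit_eq, Set.mem_Icc]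
  omega

theorem isBranch_orbitDigit (hq : 0 < q) (c n : ℕ) :
    IsBranch p q (Set.Icc ((c : ℤ) - q + 1) c) n (orbitDigit p q c n) :=
  ⟨orbit p q c n, rfl, fun k => ⟨by rw [orbitDigit]; ring, orbitDigit_mem_Icc hq c n k⟩⟩

theorem eq_orbitDigit_of_isBranch {c n : ℕ} {w : ℕ → ℤ} (hq : 0 < q)
    (h : IsBranch p q (Set.Icc ((c : ℤ) - q + 1) c) n w) : w = orbitDigit p q c n :=
  h.eq (isBranch_orbitDigit hq c n) fun x hx y hy => by
    rw [Set.mem_Icc] at hx hy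
    rw [abs_lt]
    omega

theorem lowAlph_eq (hq : 0 < q) :
    LowAlph q = Set.Icc (((q - 1 : ℕ) : ℤ) - q + 1) (q - 1 : ℕ) := by
  rw [LowAlph, Nat.cast_sub (by omega)]
  congr 1
  ring

theorem upAlph_eq (hp : 0 < p) :
    UpAlph p q = Set.Icc (((p - 1 : ℕ) : ℤ) - q + 1) (p - 1 : ℕ) := by
  rw [UpAlph, Nat.cast_sub (by omega)]
  congr 1
  ring

theorem abs_orbitDigit_le (hq : 0 < q) (hqp : q ≤ p) {c : ℕ} (hc : c < p) (n k : ℕ) :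
    |orbitDigit p q c n k| ≤ p := by
  have := orbitDigit_mem_Icc (p := p) hq c n k
  rw [Set.mem_Icc] at this
  rw [abs_le]
  omega

theorem orbit_add_pow_mul (hq : 0 < q) (c n N u : ℕ) {k : ℕ} (hk : k ≤ N) :
    orbit p q c (n + q ^ N * u) k = orbit p q c n k + p ^ k * q ^ (N - k) * u := by
  induction k with
  | zero => simp [orbit]
  | succ k ih =>
    obtain ⟨j, rfl⟩ := Nat.exists_eq_add_of_lt hk
    rw [orbit, orbit, ih (by omega), show k + j + 1 - k = j + 1 by omega,
      show k + j + 1 - (k + 1) = j by omega, ← Nat.add_mul_div_right _ _ hq]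
    congr 1
    ring

theorem orbitDigit_add_pow_mul (hq : 0 < q) (c n u : ℕ) {k N : ℕ} (hk : k < N) :
    orbitDigit p q c (n + q ^ N * u) k = orbitDigit p q c n k := by
  obtain ⟨j, rfl⟩ := Nat.exists_eq_add_of_lt hk
  rw [orbitDigit, orbitDigit, orbit_add_pow_mul hq _ _ _ _ (by omega),
    orbit_add_pow_mul hq _ _ _ _ (by omega), show k + j + 1 - k = j + 1 by omega,
    show k + j + 1 - (k + 1) = j by omega]
  push_cast
  ring

theorem orbit_mono {c c' : ℕ} (hc : c ≤ c') (n k : ℕ) :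
    orbit p q c n k ≤ orbit p q c' n k := by
  induction k with
  | zero => rfl
  | succ k ih =>
    exact Nat.div_le_div_right (Nat.add_le_add (Nat.mul_le_mul_left p ih) hc)

def spanDigit (p q n k : ℕ) : ℤ := orbitDigit p q (p - 1) n k - orbitDigit p q (q - 1) n k

def gap (p q n k : ℕ) : ℤ := orbit p q (p - 1) n k - orbit p q (q - 1) n k + 1

theorem spanDigit_mem_Dalph (hq : 0 < q) (hqp : q ≤ p) (n k : ℕ) :
    spanDigit p q n k ∈ Dalph p q := by
  have hmax := orbitDigit_mem_Icc (p := p) hq (p - 1) n k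
  have hmin := orbitDigit_mem_Icc (p := p) hq (q - 1) n k
  rw [Set.mem_Icc] at hmax hmin
  rw [spanDigit, Dalph, Set.mem_Icc]
  omega

theorem spanDigit_add_pow_mul (hq : 0 < q) (n u : ℕ) {k N : ℕ} (hk : k < N) :
    spanDigit p q (n + q ^ N * u) k = spanDigit p q n k := by
  rw [spanDigit, spanDigit, orbitDigit_add_pow_mul hq _ _ _ hk,
    orbitDigit_add_pow_mul hq _ _ _ hk]

theorem gap_add_pow_mul (hq : 0 < q) (n N u : ℕ) :
    gap p q (n + q ^ N * u) N = gap p q n N := by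
  rw [gap, gap, orbit_add_pow_mul hq _ _ _ _ le_rfl, orbit_add_pow_mul hq _ _ _ _ le_rfl]
  push_cast
  ring

theorem spanDigit_eq (hq : 0 < q) (hqp : q ≤ p) (n k : ℕ) :
    spanDigit p q n k = p - q + (p * orbit p q (q - 1) n k + q - 1 : ℤ) % q
      - (p * orbit p q (q - 1) n k + q - 1 + p * gap p q n k : ℤ) % q := by
  have hmax : (p * orbit p q (p - 1) n k + (p - 1 : ℕ) : ℤ)
      = p * orbit p q (q - 1) n k + q - 1 + p * gap p q n k - q := by
    rw [gap]
    push_cast [Nat.cast_sub (by omega : 1 ≤ p)]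
    ring
  rw [spanDigit, orbitDigit_eq, orbitDigit_eq, hmax, Int.sub_emod_right,
    Nat.cast_sub (by omega : 1 ≤ p), Nat.cast_sub (by omega : 1 ≤ q)]
  push_cast
  ring_nf

theorem gap_succ (n k : ℕ) :
    q * gap p q n (k + 1) = p * gap p q n k + spanDigit p q n k - (p - q) := by
  rw [gap, gap, spanDigit, orbitDigit, orbitDigit]
  ring

theorem spanDigit_of_dvd_gap (hq : 0 < q) (hqp : q ≤ p) {n k : ℕ}
    (h : (q : ℤ) ∣ gap p q n k) : spanDigit p q n k = p - q := by
  obtain ⟨g, hg⟩ := h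
  rw [spanDigit_eq hq hqp, hg, show (p : ℤ) * (q * g) = q * (p * g) by ring,
    Int.add_mul_emod_self_left]
  ring

theorem exists_add_pow_mul_modEq (hco : Nat.Coprime p q) (hq : 0 < q) (j : ℕ) (x y : ℤ) :
    ∃ u : ℕ, x + p ^ j * u ≡ y [ZMOD q] := by
  have : NeZero q := NeZero.of_pos hq
  obtain ⟨v, hv⟩ := (((ZMod.isUnit_iff_coprime p q).2 hco).pow j).exists_right_inv
  refine ⟨(((y - x : ℤ) : ZMod q) * v).val, ?_⟩
  rw [← ZMod.intCast_eq_intCast_iff]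
  push_cast
  rw [ZMod.natCast_zmod_val]
  linear_combination (↑y - ↑x) * hv

theorem exists_spanDigit_add_pow_mul_eq (hco : Nat.Coprime p q) (hq : 0 < q) (hqp : q ≤ p)
    (n N : ℕ) (t : ℤ) :
    ∃ u : ℕ, spanDigit p q (n + q ^ N * u) N = p - q + t % q - (t + p * gap p q n N) % q := by
  obtain ⟨u, hu⟩ :=
    exists_add_pow_mul_modEq hco hq (N + 1) (p * orbit p q (q - 1) n N + q - 1) t
  refine ⟨u, ?_⟩
  have hstate : (p * orbit p q (q - 1) (n + q ^ N * u) N + q - 1 : ℤ)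
      = p * orbit p q (q - 1) n N + q - 1 + p ^ (N + 1) * u := by
    rw [orbit_add_pow_mul hq _ _ _ _ le_rfl, Nat.sub_self, pow_zero]
    push_cast
    ring
  rw [spanDigit_eq hq hqp, gap_add_pow_mul hq, hstate, hu, (hu.add_right _).eq]

theorem exists_le_spanDigit_add_pow_mul (hco : Nat.Coprime p q) (hq : 0 < q) (hqp : q ≤ p)
    (n N : ℕ) : ∃ u : ℕ, (p - q : ℤ) ≤ spanDigit p q (n + q ^ N * u) N := by
  obtain ⟨u, hu⟩ := exists_spanDigit_add_pow_mul_eq hco hq hqp n N (q - 1)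
  refine ⟨u, ?_⟩
  have := Int.emod_lt_of_pos ((q - 1 : ℤ) + p * gap p q n N) (by omega : (0 : ℤ) < q)
  rw [hu, Int.emod_eq_of_lt (by omega) (by omega)]
  omega

theorem exists_spanDigit_add_pow_mul_le (hco : Nat.Coprime p q) (hq : 0 < q) (hqp : q ≤ p)
    (n N : ℕ) : ∃ u : ℕ, spanDigit p q (n + q ^ N * u) N ≤ p - q := by
  obtain ⟨u, hu⟩ := exists_spanDigit_add_pow_mul_eq hco hq hqp n N 0
  refine ⟨u, ?_⟩
  have := Int.emod_nonneg ((0 : ℤ) + p * gap p q n N) (by omega : (q : ℤ) ≠ 0)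
  rw [hu, Int.zero_emod]
  omega

theorem exists_spanDigit_add_pow_mul_eq_add (hco : Nat.Coprime p q) (hq : 0 < q) (hqp : q ≤ p)
    {n N : ℕ} (hgap : ¬ (q : ℤ) ∣ gap p q n N) :
    ∃ u₁ u₂ : ℕ, spanDigit p q (n + q ^ N * u₁) N = spanDigit p q (n + q ^ N * u₂) N + q := by
  obtain ⟨u₁, hu₁⟩ := exists_spanDigit_add_pow_mul_eq hco hq hqp n N (q - 1)
  obtain ⟨u₂, hu₂⟩ := exists_spanDigit_add_pow_mul_eq hco hq hqp n N 0
  refine ⟨u₁, u₂, ?_⟩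
  set γ := (p * gap p q n N : ℤ) % q with hγ
  have hγ₀ : γ ≠ 0 := fun h => hgap <|
    (Nat.isCoprime_iff_coprime.2 hco).symm.dvd_of_dvd_mul_left (Int.dvd_of_emod_eq_zero h)
  have hγ₁ := Int.emod_nonneg (p * gap p q n N : ℤ) (by omega : (q : ℤ) ≠ 0)
  have hγ₂ := Int.emod_lt_of_pos (p * gap p q n N : ℤ) (by omega : (0 : ℤ) < q)
  -- a nonzero residue `γ` of `p * gap` makes the two choices of `t` differ by exactly `q`
  have hshift : ((q - 1 : ℤ) + p * gap p q n N) % q = γ - 1 := by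
    rw [← Int.emod_eq_of_lt (by omega : 0 ≤ γ - 1) (by omega : γ - 1 < q), hγ,
      Int.sub_emod, Int.emod_emod_of_dvd _ dvd_rfl, ← Int.sub_emod,
      show (q - 1 : ℤ) + p * gap p q n N = p * gap p q n N - 1 + q * 1 by ring,
      Int.add_mul_emod_self_left]
  rw [hu₁, hu₂, hshift, zero_add, Int.zero_emod,
    Int.emod_eq_of_lt (by omega : (0 : ℤ) ≤ q - 1) (by omega)]
  ring

theorem gap_pos (hqp : q ≤ p) (n k : ℕ) : 0 < gap p q n k := by
  have := orbit_mono (p := p) (q := q) (by omega : q - 1 ≤ p - 1) n k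
  rw [gap]
  omega

theorem exists_not_dvd_gap (hco : Nat.Coprime p q) (hq : 1 < q) (hqp : q ≤ p) (n N : ℕ) :
    ∃ M, N ≤ M ∧ ¬ (q : ℤ) ∣ gap p q n M := by
  by_contra! hall
  -- while `q ∣ gap`, the digit is forced and `gap` gets multiplied by `p / q` at each step
  have hgrow : ∀ j, (q : ℤ) ^ j * gap p q n (N + j) = p ^ j * gap p q n N := by
    intro j
    induction j with
    | zero => simp
    | succ j ih =>
      have hstep := gap_succ (p := p) (q := q) n (N + j)
      rw [spanDigit_of_dvd_gap (by omega) hqp (hall _ (by omega))] at hstep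
      rw [← add_assoc, pow_succ, mul_assoc, hstep, pow_succ]
      linear_combination p * ih
  set g := (gap p q n N).toNat
  have hg : (g : ℤ) = gap p q n N := Int.toNat_of_nonneg (gap_pos hqp n N).le
  have hdvd : (q : ℤ) ^ g ∣ g := by
    rw [hg]
    exact ((Nat.isCoprime_iff_coprime.2 hco).symm.pow).dvd_of_dvd_mul_left ⟨_, (hgrow g).symm⟩
  have hle := Int.le_of_dvd (by rw [hg]; exact gap_pos hqp n N) hdvd
  have hlt : (g : ℤ) < (q : ℤ) ^ g := by exact_mod_cast Nat.lt_pow_self hq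
  linarith

theorem exists_forall_spanDigit_add_pow_mul (hq : 0 < q) (P : ℤ → Prop)
    (hP : ∀ n N : ℕ, ∃ u : ℕ, P (spanDigit p q (n + q ^ N * u) N)) (K : ℕ) :
    ∀ n N : ℕ, ∃ v : ℕ, ∀ t < K, P (spanDigit p q (n + q ^ N * v) (N + t)) := by
  induction K with
  | zero => exact fun n N => ⟨0, fun t ht => absurd ht (Nat.not_lt_zero t)⟩
  | succ K ih =>
    intro n N
    obtain ⟨u, hu⟩ := hP n N
    obtain ⟨v, hv⟩ := ih (n + q ^ N * u) (N + 1)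
    have hsplit : n + q ^ N * (u + q * v) = n + q ^ N * u + q ^ (N + 1) * v := by ring
    refine ⟨u + q * v, fun t ht => ?_⟩
    rw [hsplit]
    rcases t with _ | t
    · rwa [spanDigit_add_pow_mul hq _ _ (by omega)]
    · rw [show N + (t + 1) = N + 1 + t by omega]
      exact hv t (by omega)

theorem exists_spanDigit_separated (hco : Nat.Coprime p q) (hq : 1 < q) (hqp : q ≤ p) (n N K : ℕ) :
    ∃ M, N ≤ M ∧ ∃ w₁ w₂ : ℕ,
      (∀ k < M, spanDigit p q w₁ k = spanDigit p q n k ∧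
        spanDigit p q w₂ k = spanDigit p q n k) ∧
      spanDigit p q w₁ M = spanDigit p q w₂ M + q ∧
      ∀ t < K, spanDigit p q w₂ (M + 1 + t) ≤ spanDigit p q w₁ (M + 1 + t) := by
  have hq₀ : 0 < q := by omega
  obtain ⟨M, hNM, hgap⟩ := exists_not_dvd_gap hco hq hqp n N
  obtain ⟨u₁, u₂, hM⟩ := exists_spanDigit_add_pow_mul_eq_add hco hq₀ hqp hgap
  obtain ⟨v₁, hv₁⟩ := exists_forall_spanDigit_add_pow_mul hq₀ (fun d => (p - q : ℤ) ≤ d)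
    (exists_le_spanDigit_add_pow_mul hco hq₀ hqp) K (n + q ^ M * u₁) (M + 1)
  obtain ⟨v₂, hv₂⟩ := exists_forall_spanDigit_add_pow_mul hq₀ (fun d => d ≤ p - q)
    (exists_spanDigit_add_pow_mul_le hco hq₀ hqp) K (n + q ^ M * u₂) (M + 1)
  refine ⟨M, hNM, _, _, fun k hk => ⟨?_, ?_⟩, ?_, fun t ht => (hv₂ t ht).trans (hv₁ t ht)⟩
  · rw [spanDigit_add_pow_mul hq₀ _ _ (by omega), spanDigit_add_pow_mul hq₀ _ _ hk]
  · rw [spanDigit_add_pow_mul hq₀ _ _ (by omega), spanDigit_add_pow_mul hq₀ _ _ hk]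
  · rw [spanDigit_add_pow_mul hq₀ _ v₁ M.lt_succ_self,
      spanDigit_add_pow_mul hq₀ _ v₂ M.lt_succ_self, hM]

section Evaluation

variable {w : ℕ → ℤ} {B : ℤ}

theorem abs_rho_term_le (hq : 0 < q) (hw : ∀ k, |w k| ≤ B) (i : ℕ) :
    |((w i : ℝ) / q) * ((q : ℝ) / p) ^ (i + 1)| ≤ (B : ℝ) / q * ((q : ℝ) / p) ^ (i + 1) := by
  have hq' : (0 : ℝ) < q := by exact_mod_cast hq
  rw [abs_mul, abs_div, abs_of_pos hq',
    abs_of_nonneg (by positivity : (0 : ℝ) ≤ (q / p) ^ (i + 1))]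
  gcongr
  exact_mod_cast hw i

theorem summable_rho_term (hq : 0 < q) (hqp : q < p) (hw : ∀ k, |w k| ≤ B) :
    Summable fun i => ((w i : ℝ) / q) * ((q : ℝ) / p) ^ (i + 1) := by
  have hr : (q : ℝ) / p < 1 := (div_lt_one (by norm_cast; omega)).2 (by exact_mod_cast hqp)
  refine .of_norm_bounded
    ((summable_geometric_of_lt_one (by positivity) hr).mul_left ((B : ℝ) / q * ((q : ℝ) / p)))
    fun i => (abs_rho_term_le hq hw i).trans_eq (by ring)

theorem abs_rho_le (hq : 0 < q) (hqp : q < p) (hw : ∀ k, |w k| ≤ B) :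
    |rho p q w| ≤ B / (p - q) := by
  have hq' : (0 : ℝ) < q := by exact_mod_cast hq
  have hpq : (0 : ℝ) < p - q := by rw [sub_pos]; exact_mod_cast hqp
  have hr : (q : ℝ) / p < 1 := (div_lt_one (by norm_cast; omega)).2 (by exact_mod_cast hqp)
  have hp : (0 : ℝ) < p := by linarith
  have hsum : HasSum (fun i => (B : ℝ) / q * ((q : ℝ) / p) ^ (i + 1)) (B / (p - q)) := by
    have h := (hasSum_geometric_of_lt_one (by positivity) hr).mul_left
      ((B : ℝ) / q * ((q : ℝ) / p))
    rw [show (B : ℝ) / q * ((q : ℝ) / p) * (1 - (q : ℝ) / p)⁻¹ = B / (p - q) by field_simp] at h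
    exact h.congr_fun fun i => by ring
  exact tsum_of_norm_bounded hsum fun i =>
    (Real.norm_eq_abs _).trans_le (abs_rho_term_le hq hw i)

theorem rho_eq_sum_add (hq : 0 < q) (hqp : q < p) (hw : ∀ k, |w k| ≤ B) (L : ℕ) :
    rho p q w = ∑ k ∈ Finset.range L, ((w k : ℝ) / q) * ((q : ℝ) / p) ^ (k + 1)
      + ((q : ℝ) / p) ^ L * rho p q (fun i => w (i + L)) := by
  rw [rho, ← (summable_rho_term hq hqp hw).sum_add_tsum_nat_add L, rho, ← tsum_mul_left]
  congr 2
  ext i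
  ring

theorem abs_rho_le_of_eq_zero (hq : 0 < q) (hqp : q < p) (hw : ∀ k, |w k| ≤ B) {L : ℕ}
    (hzero : ∀ k < L, w k = 0) : |rho p q w| ≤ ((q : ℝ) / p) ^ L * (B / (p - q)) := by
  rw [rho_eq_sum_add hq hqp hw L, Finset.sum_eq_zero fun k hk => by
    rw [hzero k (Finset.mem_range.1 hk), Int.cast_zero, zero_div, zero_mul], zero_add,
    abs_mul, abs_of_nonneg (by positivity)]
  gcongr
  exact abs_rho_le hq hqp fun k => hw (k + L)

theorem sub_le_rho (hq : 0 < q) (hqp : q < p) (hw : ∀ k, |w k| ≤ B) {M L : ℕ} (hML : M < L)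
    (hnonneg : ∀ k < L, 0 ≤ w k) :
    (w M : ℝ) / q * ((q : ℝ) / p) ^ (M + 1) - ((q : ℝ) / p) ^ L * (B / (p - q)) ≤ rho p q w := by
  have hhead : (w M : ℝ) / q * ((q : ℝ) / p) ^ (M + 1)
      ≤ ∑ k ∈ Finset.range L, ((w k : ℝ) / q) * ((q : ℝ) / p) ^ (k + 1) :=
    Finset.single_le_sum (f := fun k => ((w k : ℝ) / q) * ((q : ℝ) / p) ^ (k + 1))
      (fun k hk => by
        have : (0 : ℝ) ≤ w k := by exact_mod_cast hnonneg k (Finset.mem_range.1 hk)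
        positivity)
      (Finset.mem_range.2 hML)
  have htail : -(((q : ℝ) / p) ^ L * (B / (p - q)))
      ≤ ((q : ℝ) / p) ^ L * rho p q (fun i => w (i + L)) := by
    rw [← mul_neg]
    gcongr
    exact neg_le_of_abs_le (abs_rho_le hq hqp fun k => hw (k + L))
  rw [rho_eq_sum_add hq hqp hw L]
  linarith

theorem rho_sub (hq : 0 < q) (hqp : q < p) {v : ℕ → ℤ} {C : ℤ} (hw : ∀ k, |w k| ≤ B)
    (hv : ∀ k, |v k| ≤ C) : rho p q (w - v) = rho p q w - rho p q v := by
  rw [rho, rho, rho, ← (summable_rho_term hq hqp hw).tsum_sub (summable_rho_term hq hqp hv)]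
  congr 1
  ext i
  push_cast [Pi.sub_apply]
  ring

end Evaluation

theorem abs_spanDigit_le (hq : 0 < q) (hqp : q ≤ p) (n k : ℕ) : |spanDigit p q n k| ≤ p := by
  have := spanDigit_mem_Dalph hq hqp n k
  rw [Dalph, Set.mem_Icc] at this
  rw [abs_le]
  omega

theorem abs_spanDigit_sub_le (hq : 0 < q) (hqp : q ≤ p) (m n k : ℕ) :
    |(spanDigit p q m - spanDigit p q n) k| ≤ 2 * q - 2 := by
  have hm := spanDigit_mem_Dalph hq hqp m k
  have hn := spanDigit_mem_Dalph hq hqp n k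
  rw [Dalph, Set.mem_Icc] at hm hn
  rw [Pi.sub_apply, abs_le]
  omega

theorem exists_rho_spanDigit_ne_abs_sub_lt (hco : Nat.Coprime p q) (hq : 1 < q) (hqp : q < p)
    (n : ℕ) {ε : ℝ} (hε : 0 < ε) :
    ∃ m, rho p q (spanDigit p q m) ≠ rho p q (spanDigit p q n) ∧
      |rho p q (spanDigit p q m) - rho p q (spanDigit p q n)| < ε := by
  have hq₀ : 0 < q := by omega
  have hsub (m n : ℕ) := rho_sub hq₀ hqp (abs_spanDigit_le hq₀ hqp.le m)
    (abs_spanDigit_le hq₀ hqp.le n)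
  set r : ℝ := q / p
  have hr₀ : 0 < r := div_pos (by exact_mod_cast hq₀) (by norm_cast; omega)
  have hr₁ : r < 1 := (div_lt_one (by norm_cast; omega)).2 (by exact_mod_cast hqp)
  set D : ℝ := ((2 * q - 2 : ℤ) : ℝ) / (p - q)
  have hD : 0 < D := div_pos (by exact_mod_cast (by omega : (0 : ℤ) < 2 * q - 2))
    (by rw [sub_pos]; exact_mod_cast hqp)
  obtain ⟨N, hN⟩ := exists_pow_lt_of_lt_one (div_pos hε hD) hr₁
  obtain ⟨K, hK⟩ := exists_pow_lt_of_lt_one (one_div_pos.2 hD) hr₁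
  obtain ⟨M, hNM, w₁, w₂, hlow, hM, hwindow⟩ := exists_spanDigit_separated hco hq hqp.le n N K
  have hclose (w : ℕ) (hw : ∀ k < M, spanDigit p q w k = spanDigit p q n k) :
      |rho p q (spanDigit p q w) - rho p q (spanDigit p q n)| < ε := by
    rw [← hsub]
    calc _ ≤ r ^ M * D := abs_rho_le_of_eq_zero hq₀ hqp (abs_spanDigit_sub_le hq₀ hqp.le w n)
            fun k hk => sub_eq_zero.2 (hw k hk)
      _ ≤ r ^ N * D := mul_le_mul_of_nonneg_right (pow_le_pow_of_le_one hr₀.le hr₁.le hNM) hD.le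
      _ < ε := (lt_div_iff₀ hD).1 hN
  have hsep : rho p q (spanDigit p q w₂) < rho p q (spanDigit p q w₁) := by
    have hnonneg : ∀ k < M + 1 + K, 0 ≤ (spanDigit p q w₁ - spanDigit p q w₂) k := by
      intro k hk
      rw [Pi.sub_apply, sub_nonneg]
      rcases lt_trichotomy k M with hkM | rfl | hkM
      · rw [(hlow k hkM).1, (hlow k hkM).2]
      · omega
      · obtain ⟨t, rfl⟩ : ∃ t, k = M + 1 + t := ⟨k - (M + 1), by omega⟩
        exact hwindow t (by omega)
    have hlower := sub_le_rho hq₀ hqp (abs_spanDigit_sub_le hq₀ hqp.le w₁ w₂)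
      (by omega : M < M + 1 + K) hnonneg
    rw [Pi.sub_apply, hM, add_sub_cancel_left, Int.cast_natCast, div_self (by positivity),
      one_mul, hsub] at hlower
    have hpos : 0 < r ^ (M + 1) - r ^ (M + 1 + K) * D := by
      rw [pow_add r (M + 1) K, mul_assoc, ← mul_one_sub]
      exact mul_pos (by positivity) (sub_pos.2 ((lt_div_iff₀ hD).1 (by simpa using hK)))
    linarith
  by_cases h : rho p q (spanDigit p q w₁) = rho p q (spanDigit p q n)
  · exact ⟨w₂, fun h₂ => hsep.ne (h₂.trans h.symm), hclose w₂ fun k hk => (hlow k hk).2⟩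
  · exact ⟨w₁, h, hclose w₁ fun k hk => (hlow k hk).1⟩

theorem rho_sub_rho_eq_rho_spanDigit (hq : 0 < q) (hqp : q < p) {n : ℕ} {wmin wmax : ℕ → ℤ}
    (hmin : IsBranch p q (LowAlph q) n wmin) (hmax : IsBranch p q (UpAlph p q) n wmax) :
    rho p q wmax - rho p q wmin = rho p q (spanDigit p q n) := by
  rw [upAlph_eq (by omega)] at hmax
  rw [lowAlph_eq hq] at hmin
  rw [eq_orbitDigit_of_isBranch hq hmax, eq_orbitDigit_of_isBranch hq hmin,
    ← rho_sub hq hqp (abs_orbitDigit_le hq hqp.le (by omega) n)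
      (abs_orbitDigit_le hq hqp.le (by omega) n)]
  rfl

theorem preperfect_range_rho_spanDigit (hco : Nat.Coprime p q) (hq : 1 < q) (hqp : q < p) :
    Preperfect (Set.range fun n => rho p q (spanDigit p q n)) := by
  rintro _ ⟨n, rfl⟩
  rw [accPt_iff_nhds]
  intro U hU
  obtain ⟨ε, hε, hball⟩ := Metric.mem_nhds_iff.1 hU
  obtain ⟨m, hne, hlt⟩ := exists_rho_spanDigit_ne_abs_sub_lt hco hq hqp n hε
  exact ⟨_, ⟨hball (by rwa [Metric.mem_ball, Real.dist_eq]), m, rfl⟩, hne⟩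

end RationalBase

theorem stmt2_general (p q : ℕ) (hco : Nat.Coprime p q) (hq : 1 < q) (hpq : q < p)
    (mw mx : ℕ → ℕ → ℤ)
    (hmw : ∀ n, IsBranch p q (LowAlph q) n (mw n))
    (hmx : ∀ n, IsBranch p q (UpAlph p q) n (mx n)) :
    ∀ x ∈ closure {x : ℝ | ∃ n : ℕ, x = rho p q (mx n) - rho p q (mw n)},
      AccPt x (Filter.principal
        (closure {x : ℝ | ∃ n : ℕ, x = rho p q (mx n) - rho p q (mw n)})) := by
  have hspan (n : ℕ) := RationalBase.rho_sub_rho_eq_rho_spanDigit (by omega) hpq (hmw n) (hmx n)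
  have hS : {x : ℝ | ∃ n : ℕ, x = rho p q (mx n) - rho p q (mw n)}
      = Set.range fun n => rho p q (RationalBase.spanDigit p q n) := by
    ext x
    simp only [Set.mem_ofPred_eq, Set.mem_range, hspan, eq_comm]
  rw [hS]
  exact (RationalBase.preperfect_range_rho_spanDigit hco hq hpq).perfect_closure.acc

theorem stmt2 (p q : ℕ) (hco : Nat.Coprime p q) (hq : 1 < q) (hpq : q < p)
    (hbig : 2 * q - 1 < p)
    (mw mx : ℕ → ℕ → ℤ)
    (hmw : ∀ n, IsBranch p q (LowAlph q) n (mw n))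
    (hmx : ∀ n, IsBranch p q (UpAlph p q) n (mx n)) :
    ∀ x ∈ closure {x : ℝ | ∃ n : ℕ, x = rho p q (mx n) - rho p q (mw n)},
      AccPt x (Filter.principal
        (closure {x : ℝ | ∃ n : ℕ, x = rho p q (mx n) - rho p q (mw n)})) :=
  stmt2_general p q hco hq hpq mw mx hmw hmx
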